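/- arXiv:2012.13255 — 2 statements merged into one kernel-verified Lean document; each statement's English description precedes it below -/
import Mathlib

section
/- Let Y be a finite type with at least two elements, let γ ≥ 0, and let f, g : X → Y → ℝ be score functions such that |f x y − g x y| ≤ γ for every x ∈ X and y ∈ Y (i.e., f is (γ, X)-compressible to g). Then for every pair (x, y): if g x y ≤ max_{j ≠ y} g x j, then f x y ≤ 2γ + max_{j ≠ y} f x j. Consequently, for any probability measure μ on X × Y one has L₀(g) ≤ L_{2γ}(f), and for any finite sample S one has L̂₀(g; S) ≤ L̂_{2γ}(f; S). (This is the pointwise margin-transfer step underlying the compression-based generalization bound used in the paper's appendix: a γ-accurate compression of f can only misclassify points where f has margin at most 2γ.) -/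
open MeasureTheory
open scoped Classical

/-- The maximum score assigned by `h` at input `x` over all labels other than `y`
(as a real supremum; equal to the max over `j ≠ y` when such `j` exist). -/
noncomputable def maxOther {X Y : Type*} [Fintype Y] (h : X → Y → ℝ) (x : X) (y : Y) : ℝ :=
  ⨆ j : {j : Y // j ≠ y}, h x (j : Y)

/-- The margin loss at level `γ`:
`L_γ(h) = μ {(x,y) : h x y ≤ γ + max_{j ≠ y} h x j}`. -/
noncomputable def marginLoss {X Y : Type*} [MeasurableSpace X] [MeasurableSpace Y] [Fintype Y]
    (μ : Measure (X × Y)) (γ : ℝ) (h : X → Y → ℝ) : ℝ :=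
  (μ {p : X × Y | h p.1 p.2 ≤ γ + maxOther h p.1 p.2}).toReal

/-- The empirical margin loss at level `γ` on a sample `S` of `m` points:
`L̂_γ(h; S) = (1/m) · #{i : h xᵢ yᵢ ≤ γ + max_{j ≠ yᵢ} h xᵢ j}`. -/
noncomputable def empMarginLoss {X Y : Type*} [Fintype Y] {m : ℕ}
    (γ : ℝ) (h : X → Y → ℝ) (S : Fin m → X × Y) : ℝ :=
  ((Finset.univ.filter fun i : Fin m =>
      h (S i).1 (S i).2 ≤ γ + maxOther h (S i).1 (S i).2).card : ℝ) / m

/-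
A `γ`-accurate approximation moves every score by at most `γ`, so it moves both the true-label
score and the best competing score by at most `γ`, hence the margin by at most `2γ`. A point
misclassified by `g` (margin `≤ 0`) therefore has `f`-margin `≤ 2γ`, and the losses compare
through inclusion of the corresponding sets of points.
-/

section MarginTransfer

variable {X Y : Type*} [Fintype Y]

theorem maxOther_le_maxOther_add [Nontrivial Y] {h h' : X → Y → ℝ} {x : X} {c : ℝ}
    (hle : ∀ j, h x j ≤ h' x j + c) (y : Y) :
    maxOther h x y ≤ maxOther h' x y + c := by
  obtain ⟨j, hj⟩ := exists_ne y
  have : Nonempty {j : Y // j ≠ y} := ⟨⟨j, hj⟩⟩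
  refine ciSup_le fun k => (hle k).trans ?_
  gcongr
  exact le_ciSup (f := fun j : {j : Y // j ≠ y} => h' x j) (Set.finite_range _).bddAbove k

theorem le_add_maxOther_of_abs_sub_le [Nontrivial Y] {f g : X → Y → ℝ} {γ β : ℝ} {x : X}
    (hfg : ∀ j, |f x j - g x j| ≤ γ) {y : Y} (hg : g x y ≤ β + maxOther g x y) :
    f x y ≤ β + 2 * γ + maxOther f x y := by
  have hf : f x y ≤ g x y + γ := by linarith [(abs_le.mp (hfg y)).2]
  have hmax : maxOther g x y ≤ maxOther f x y + γ :=
    maxOther_le_maxOther_add (fun j => by linarith [(abs_le.mp (hfg j)).1]) y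
  linarith

theorem marginLoss_le_marginLoss [MeasurableSpace X] [MeasurableSpace Y]
    (μ : Measure (X × Y)) [IsFiniteMeasure μ] {h h' : X → Y → ℝ} {β β' : ℝ}
    (himp : ∀ x y, h x y ≤ β + maxOther h x y → h' x y ≤ β' + maxOther h' x y) :
    marginLoss μ β h ≤ marginLoss μ β' h' :=
  ENNReal.toReal_mono (measure_ne_top μ _) (measure_mono fun p hp => himp p.1 p.2 hp)

theorem empMarginLoss_le_empMarginLoss {m : ℕ} (S : Fin m → X × Y) {h h' : X → Y → ℝ}
    {β β' : ℝ} (himp : ∀ x y, h x y ≤ β + maxOther h x y → h' x y ≤ β' + maxOther h' x y) :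
    empMarginLoss β h S ≤ empMarginLoss β' h' S := by
  unfold empMarginLoss
  gcongr ?_ / _
  exact_mod_cast Finset.card_le_card
    (Finset.monotone_filter_right _ fun i _ => himp (S i).1 (S i).2)

end MarginTransfer

theorem margin_transfer_of_compressible_general
    {X Y : Type*} [MeasurableSpace X] [MeasurableSpace Y] [Fintype Y] [Nontrivial Y]
    (γ : ℝ)
    (f g : X → Y → ℝ)
    (hfg : ∀ x y, |f x y - g x y| ≤ γ) :
    (∀ x y, g x y ≤ maxOther g x y → f x y ≤ 2 * γ + maxOther f x y) ∧
    (∀ μ : Measure (X × Y), IsProbabilityMeasure μ →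
      marginLoss μ 0 g ≤ marginLoss μ (2 * γ) f) ∧
    (∀ (m : ℕ) (S : Fin m → X × Y),
      empMarginLoss 0 g S ≤ empMarginLoss (2 * γ) f S) := by
  have transfer : ∀ x y, g x y ≤ 0 + maxOther g x y → f x y ≤ 2 * γ + maxOther f x y :=
    fun x y hg => by simpa using le_add_maxOther_of_abs_sub_le (hfg x) hg
  refine ⟨fun x y hg => transfer x y (by rwa [zero_add]), ?_, ?_⟩
  · intro μ _
    exact marginLoss_le_marginLoss μ transfer
  · intro m S
    exact empMarginLoss_le_empMarginLoss S transfer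

/-- If `f` is `(γ, X)`-compressible to `g` (i.e. `|f x y − g x y| ≤ γ`
everywhere), then pointwise any point misclassified by `g` has `f`-margin at most `2γ`;
consequently `L₀(g) ≤ L_{2γ}(f)` for every probability measure `μ`, and
`L̂₀(g; S) ≤ L̂_{2γ}(f; S)` for every finite sample `S`. -/
theorem margin_transfer_of_compressible
    {X Y : Type*} [MeasurableSpace X] [MeasurableSpace Y] [Fintype Y] [Nontrivial Y]
    (γ : ℝ) (hγ : 0 ≤ γ)
    (f g : X → Y → ℝ)
    (hfg : ∀ x y, |f x y - g x y| ≤ γ) :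
    (∀ x y, g x y ≤ maxOther g x y → f x y ≤ 2 * γ + maxOther f x y) ∧
    (∀ μ : Measure (X × Y), IsProbabilityMeasure μ →
      marginLoss μ 0 g ≤ marginLoss μ (2 * γ) f) ∧
    (∀ (m : ℕ) (S : Fin m → X × Y),
      empMarginLoss 0 g S ≤ empMarginLoss (2 * γ) f S) :=
  margin_transfer_of_compressible_general γ f g hfg
end

section
/- Let X be a measurable space, Y a finite type with at least two elements, and μ a probability measure on X × Y. Let r ≥ 2 and d ≥ 1 be natural numbers, let γ ≥ 0, and let G be a finite set of measurable score functions g : X → Y → ℝ with |G| ≤ r^d. Then for every δ ∈ (0,1) and every m ≥ 1, with probability at least 1 − δ over a sample S drawn from the m-fold product measure μ^⊗m, the following holds simultaneously for all f : X → Y → ℝ and all g ∈ G with |f x y − g x y| ≤ γ for every x ∈ X and y ∈ Y: L₀(g) ≤ L̂_{2γ}(f; S) + √((d·log r + log(1/δ)) / (2m)). (This is the compression-based generalization bound, in the form of Theorem 2.1 of Arora et al., applied in the paper's appendix to classifiers compressed to d discretized intrinsic parameters with r quantization states each.) -/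
open MeasureTheory
open scoped Classical

open scoped ENNReal
open ProbabilityTheory Real

/-!
For a fixed `g`, the indicators of the margin event of `g` at the sample points are i.i.d.
Bernoulli variables, so by Hoeffding's inequality the empirical loss `L̂₀(g; S)` falls below
`L₀(g) - ε` with probability at most `exp (-2 m ε²)`. A union bound over the at most `r ^ d`
members of `G` and the choice of `ε` in the statement make this failure probability at most `δ`.
Off the failure event, if `f` is `γ`-close to `g`, then every sample point with nonpositive
`g`-margin has `f`-margin at most `2γ`, whence `L₀(g) ≤ L̂₀(g; S) + ε ≤ L̂_{2γ}(f; S) + ε`.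
-/

section maxOther

variable {X Y : Type*} [Fintype Y] (h : X → Y → ℝ) (x : X) (y : Y)

lemma le_maxOther {j : Y} (hj : j ≠ y) : h x j ≤ maxOther h x y :=
  le_ciSup (f := fun j : {j : Y // j ≠ y} => h x j) (Set.finite_range _).bddAbove ⟨j, hj⟩

lemma exists_ne_maxOther_eq [Nontrivial Y] : ∃ j ≠ y, maxOther h x y = h x j := by
  have : Nonempty {j : Y // j ≠ y} := nonempty_subtype.2 (exists_ne y)
  obtain ⟨j, hj⟩ := exists_eq_ciSup_of_finite (f := fun j : {j : Y // j ≠ y} => h x j)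
  exact ⟨j, j.2, hj.symm⟩

lemma maxOther_le_add [Nontrivial Y] {g : X → Y → ℝ} {γ : ℝ} (hgh : ∀ j, g x j ≤ h x j + γ) :
    maxOther g x y ≤ maxOther h x y + γ := by
  obtain ⟨j, hj, hmax⟩ := exists_ne_maxOther_eq g x y
  rw [hmax]
  exact (hgh j).trans (add_le_add_left (le_maxOther h x y hj) γ)

/-- The right-hand side avoids the condition `j ≠ y`, which need not be measurable in `y`
since `Y` carries an arbitrary σ-algebra. -/
lemma le_add_maxOther_iff [Nontrivial Y] {c : ℝ} (hc : 0 ≤ c) :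
    h x y ≤ c + maxOther h x y ↔
      ∃ j₁ j₂ : Y, j₁ ≠ j₂ ∧ h x y ≤ c + h x j₁ ∧ h x y ≤ c + h x j₂ := by
  constructor
  · intro hle
    obtain ⟨j, hj, hmax⟩ := exists_ne_maxOther_eq h x y
    exact ⟨j, y, hj, hmax ▸ hle, by linarith⟩
  · rintro ⟨j₁, j₂, hne, h₁, h₂⟩
    rcases ne_or_eq j₁ y with hj | rfl
    · linarith [le_maxOther h x y hj]
    · linarith [le_maxOther h x j₁ hne.symm]

end maxOther

lemma measurableSet_le_add_maxOther {X Y : Type*} [MeasurableSpace X] [MeasurableSpace Y]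
    [Fintype Y] [Nontrivial Y] {h : X → Y → ℝ} (hh : Measurable (Function.uncurry h))
    {c : ℝ} (hc : 0 ≤ c) :
    MeasurableSet {p : X × Y | h p.1 p.2 ≤ c + maxOther h p.1 p.2} := by
  have hj : ∀ j, Measurable fun p : X × Y => h p.1 j := fun j =>
    hh.comp (measurable_fst.prodMk measurable_const)
  have : {p : X × Y | h p.1 p.2 ≤ c + maxOther h p.1 p.2} = ⋃ j₁, ⋃ j₂, ⋃ (_ : j₁ ≠ j₂),
      {p : X × Y | h p.1 p.2 ≤ c + h p.1 j₁} ∩ {p | h p.1 p.2 ≤ c + h p.1 j₂} := by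
    ext p
    simp only [Set.mem_ofPred_eq, Set.mem_iUnion, Set.mem_inter_iff, le_add_maxOther_iff h _ _ hc,
      exists_prop]
  rw [this]
  exact .iUnion fun j₁ => .iUnion fun j₂ => .iUnion fun _ =>
    (measurableSet_le hh ((hj j₁).const_add c)).inter (measurableSet_le hh ((hj j₂).const_add c))

lemma add_two_mul_le_add_maxOther_of_abs_sub_le {X Y : Type*} [Fintype Y] [Nontrivial Y]
    {f g : X → Y → ℝ} {x : X} {y : Y} {c γ : ℝ} (hfg : ∀ j, |f x j - g x j| ≤ γ)
    (hg : g x y ≤ c + maxOther g x y) : f x y ≤ c + 2 * γ + maxOther f x y := by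
  have hmax := maxOther_le_add f x y (g := g) (γ := γ) fun j => by linarith [abs_le.1 (hfg j)]
  linarith [abs_le.1 (hfg y)]

lemma empMarginLoss_le_of_abs_sub_le {X Y : Type*} [Fintype Y] [Nontrivial Y] {m : ℕ}
    {f g : X → Y → ℝ} {S : Fin m → X × Y} {c γ : ℝ}
    (hfg : ∀ i j, |f (S i).1 j - g (S i).1 j| ≤ γ) :
    empMarginLoss c g S ≤ empMarginLoss (c + 2 * γ) f S := by
  refine div_le_div_of_nonneg_right ?_ (Nat.cast_nonneg m)
  exact_mod_cast Finset.card_le_card <| Finset.monotone_filter_right _ fun i _ =>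
    add_two_mul_le_add_maxOther_of_abs_sub_le (hfg i)

lemma hasSubgaussianMGF_measureReal_sub_indicator {α : Type*} [MeasurableSpace α]
    {μ : Measure α} [IsProbabilityMeasure μ] {A : Set α} (hA : MeasurableSet A) :
    HasSubgaussianMGF (fun x => μ.real A - A.indicator 1 x) (1 / 4) μ := by
  have hZ : Measurable (A.indicator (1 : α → ℝ)) := measurable_one.indicator hA
  have hZint : Integrable (A.indicator (1 : α → ℝ)) μ := (integrable_const 1).indicator hA
  have h := hasSubgaussianMGF_of_mem_Icc_of_integral_eq_zero (a := μ.real A - 1) (b := μ.real A)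
    ((hZ.const_sub (μ.real A)).aemeasurable (μ := μ)) (ae_of_all _ fun x => ?_) ?_
  · convert h using 1
    norm_num
  · simp only [Set.mem_Icc, Set.indicator, Pi.one_apply]
    split_ifs <;> norm_num
  · rw [integral_sub (integrable_const _) hZint, integral_indicator_one hA]
    simp

lemma measure_pi_frequency_add_lt_le {α : Type*} [MeasurableSpace α] (μ : Measure α)
    [IsProbabilityMeasure μ] {A : Set α} (hA : MeasurableSet A) (m : ℕ) {ε : ℝ} (hε : 0 ≤ ε) :
    Measure.pi (fun _ : Fin m => μ)
        {S | ((Finset.univ.filter fun i => S i ∈ A).card : ℝ) / m + ε < μ.real A} ≤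
      ENNReal.ofReal (exp (-(2 * m * ε ^ 2))) := by
  set ν := Measure.pi fun _ : Fin m => μ
  set q := μ.real A
  set W : Fin m → (Fin m → α) → ℝ := fun i S => q - A.indicator 1 (S i)
  have hindep : iIndepFun W ν := iIndepFun_pi (X := fun _ x => q - A.indicator 1 x) fun _ =>
    ((measurable_one.indicator hA).const_sub q).aemeasurable
  have hsubG : ∀ i, HasSubgaussianMGF (W i) (1 / 4) ν := fun i =>
    HasSubgaussianMGF.of_map (X := fun x => q - A.indicator 1 x) (Y := fun S : Fin m → α => S i)
      (measurable_pi_apply i).aemeasurable <| by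
        rw [(measurePreserving_eval (fun _ : Fin m => μ) i).map_eq]
        exact hasSubgaussianMGF_measureReal_sub_indicator hA
  have hsum : ∀ S, ∑ i, W i S = m * q - (Finset.univ.filter fun i => S i ∈ A).card := by
    intro S
    simp [W, Finset.sum_sub_distrib, Set.indicator, Finset.sum_boole]
  calc ν {S | ((Finset.univ.filter fun i => S i ∈ A).card : ℝ) / m + ε < q}
      ≤ ν {S | m * ε ≤ ∑ i, W i S} := by
        refine measure_mono fun S (hS : _ / _ + ε < q) => ?_
        rw [Set.mem_ofPred_eq, hsum]
        rcases Nat.eq_zero_or_pos m with rfl | hm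
        · simp
        · have hm : (0 : ℝ) < m := Nat.cast_pos.2 hm
          have := mul_lt_mul_of_pos_left hS hm
          rw [mul_add, mul_div_cancel₀ _ hm.ne'] at this
          linarith
    _ = ENNReal.ofReal (ν.real {S | m * ε ≤ ∑ i, W i S}) := (ofReal_measureReal).symm
    _ ≤ ENNReal.ofReal (exp (-(m * ε) ^ 2 / (2 * ∑ _i : Fin m, (1 / 4 : NNReal)))) :=
        ENNReal.ofReal_le_ofReal
          (HasSubgaussianMGF.measure_sum_ge_le_of_iIndepFun hindep (fun i _ => hsubG i)
            (by positivity))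
    _ = ENNReal.ofReal (exp (-(2 * m * ε ^ 2))) := by
        rcases Nat.eq_zero_or_pos m with rfl | hm
        · simp
        · have hm : (m : ℝ) ≠ 0 := Nat.cast_ne_zero.2 hm.ne'
          simp only [Finset.sum_const, Finset.card_univ, Fintype.card_fin, nsmul_eq_mul]
          push_cast
          field_simp
          ring_nf

lemma measure_pi_empMarginLoss_add_lt_marginLoss_le {X Y : Type*} [MeasurableSpace X]
    [MeasurableSpace Y] [Fintype Y] [Nontrivial Y] (μ : Measure (X × Y)) [IsProbabilityMeasure μ]
    {g : X → Y → ℝ} (hg : Measurable (Function.uncurry g)) {c : ℝ} (hc : 0 ≤ c) (m : ℕ)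
    {ε : ℝ} (hε : 0 ≤ ε) :
    Measure.pi (fun _ : Fin m => μ) {S | empMarginLoss c g S + ε < marginLoss μ c g} ≤
      ENNReal.ofReal (exp (-(2 * m * ε ^ 2))) :=
  measure_pi_frequency_add_lt_le μ (measurableSet_le_add_maxOther hg hc) m hε

lemma measure_pi_exists_empMarginLoss_add_lt_marginLoss_le {X Y : Type*} [MeasurableSpace X]
    [MeasurableSpace Y] [Fintype Y] [Nontrivial Y] (μ : Measure (X × Y)) [IsProbabilityMeasure μ]
    (G : Finset (X → Y → ℝ)) (hG : ∀ g ∈ G, Measurable (Function.uncurry g)) {c : ℝ}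
    (hc : 0 ≤ c) (m : ℕ) {ε : ℝ} (hε : 0 ≤ ε) :
    Measure.pi (fun _ : Fin m => μ)
        {S | ∃ g ∈ G, empMarginLoss c g S + ε < marginLoss μ c g} ≤
      G.card * ENNReal.ofReal (exp (-(2 * m * ε ^ 2))) := by
  set ν := Measure.pi fun _ : Fin m => μ
  calc ν {S | ∃ g ∈ G, empMarginLoss c g S + ε < marginLoss μ c g}
      ≤ ν (⋃ g ∈ G, {S | empMarginLoss c g S + ε < marginLoss μ c g}) :=
        measure_mono fun _ ⟨g, hg, hS⟩ => Set.mem_biUnion hg hS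
    _ ≤ ∑ g ∈ G, ν {S | empMarginLoss c g S + ε < marginLoss μ c g} :=
        measure_biUnion_finset_le G _
    _ ≤ ∑ _g ∈ G, ENNReal.ofReal (exp (-(2 * m * ε ^ 2))) := Finset.sum_le_sum fun g hg =>
        measure_pi_empMarginLoss_add_lt_marginLoss_le μ (hG g hg) hc m hε
    _ = G.card * ENNReal.ofReal (exp (-(2 * m * ε ^ 2))) := by
        rw [Finset.sum_const, nsmul_eq_mul]

lemma natCast_mul_ofReal_exp_le {N r d : ℕ} (hr : 0 < r) (hN : N ≤ r ^ d) {m δ : ℝ}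
    (hm : 0 < m) (hδ : δ ∈ Set.Ioo 0 1) :
    (N : ℝ≥0∞) * ENNReal.ofReal (exp (-(2 * m * sqrt ((d * log r + log (1 / δ)) / (2 * m)) ^ 2)))
      ≤ ENNReal.ofReal δ := by
  have hr : (0 : ℝ) < r := Nat.cast_pos.2 hr
  have hlog : 0 ≤ d * log r + log (1 / δ) := add_nonneg
    (mul_nonneg d.cast_nonneg (log_nonneg (by exact_mod_cast hr)))
    (log_nonneg ((le_div_iff₀ hδ.1).2 (by linarith [hδ.2])))
  have hexp : exp (-(2 * m * sqrt ((d * log r + log (1 / δ)) / (2 * m)) ^ 2)) = δ / r ^ d := by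
    rw [sq_sqrt (by positivity), mul_div_cancel₀ _ (by positivity), exp_neg, exp_add,
      exp_nat_mul, exp_log hr, exp_log (by simpa using hδ.1)]
    field_simp
  rw [hexp, ← ENNReal.ofReal_natCast, ← ENNReal.ofReal_mul N.cast_nonneg]
  refine ENNReal.ofReal_le_ofReal ?_
  rw [mul_div_assoc']
  refine div_le_of_le_mul₀ (by positivity) hδ.1.le ?_
  rw [mul_comm]
  exact mul_le_mul_of_nonneg_left (by exact_mod_cast hN) hδ.1.le

theorem compression_generalization_bound_general
    {X Y : Type*} [MeasurableSpace X] [MeasurableSpace Y] [Fintype Y] [Nontrivial Y]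
    (μ : Measure (X × Y)) [IsProbabilityMeasure μ]
    (r d : ℕ) (hr : 2 ≤ r)
    (γ : ℝ)
    (G : Finset (X → Y → ℝ))
    (hGmeas : ∀ g ∈ G, Measurable (Function.uncurry g))
    (hGcard : G.card ≤ r ^ d)
    (δ : ℝ) (hδ : δ ∈ Set.Ioo (0 : ℝ) 1)
    (m : ℕ) (hm : 1 ≤ m) :
    ENNReal.ofReal (1 - δ) ≤
      Measure.pi (fun _ : Fin m => μ)
        {S : Fin m → X × Y | ∀ (f : X → Y → ℝ), ∀ g ∈ G,
          (∀ x y, |f x y - g x y| ≤ γ) →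
          marginLoss μ 0 g ≤ empMarginLoss (2 * γ) f S +
            Real.sqrt ((d * Real.log r + Real.log (1 / δ)) / (2 * m))} := by
  set ε := sqrt ((d * log r + log (1 / δ)) / (2 * m))
  set ν := Measure.pi fun _ : Fin m => μ
  set bad := {S : Fin m → X × Y | ∃ g ∈ G, empMarginLoss 0 g S + ε < marginLoss μ 0 g}
  have hbad : ν bad ≤ ENNReal.ofReal δ :=
    (measure_pi_exists_empMarginLoss_add_lt_marginLoss_le μ G hGmeas le_rfl m
      (sqrt_nonneg _)).trans (natCast_mul_ofReal_exp_le (by omega) hGcard (by exact_mod_cast hm) hδ)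
  have hgood : badᶜ ⊆ {S | ∀ (f : X → Y → ℝ), ∀ g ∈ G, (∀ x y, |f x y - g x y| ≤ γ) →
      marginLoss μ 0 g ≤ empMarginLoss (2 * γ) f S + ε} := by
    intro S hS f g hg hfg
    have hsample : marginLoss μ 0 g ≤ empMarginLoss 0 g S + ε := not_lt.1 fun h => hS ⟨g, hg, h⟩
    have hcompress := empMarginLoss_le_of_abs_sub_le (c := 0) (S := S) fun i j => hfg (S i).1 j
    rw [zero_add] at hcompress
    linarith
  calc ENNReal.ofReal (1 - δ) = 1 - ENNReal.ofReal δ := by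
        rw [ENNReal.ofReal_sub 1 hδ.1.le, ENNReal.ofReal_one]
    _ ≤ 1 - ν bad := tsub_le_tsub_left hbad 1
    _ ≤ ν badᶜ := tsub_le_iff_left.2 (measure_univ (μ := ν) ▸ measure_univ_le_add_compl bad)
    _ ≤ _ := measure_mono hgood

/-- Compression-based generalization bound (Arora et al., Thm 2.1 form):
for a finite class `G` of measurable score functions with `|G| ≤ r ^ d`, with probability at
least `1 − δ` over `S ~ μ^⊗m`, simultaneously for all `f` and all `g ∈ G` with
`|f x y − g x y| ≤ γ` everywhere,
`L₀(g) ≤ L̂_{2γ}(f; S) + √((d·log r + log(1/δ)) / (2m))`. -/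
theorem compression_generalization_bound
    {X Y : Type*} [MeasurableSpace X] [MeasurableSpace Y] [Fintype Y] [Nontrivial Y]
    (μ : Measure (X × Y)) [IsProbabilityMeasure μ]
    (r d : ℕ) (hr : 2 ≤ r) (hd : 1 ≤ d)
    (γ : ℝ) (hγ : 0 ≤ γ)
    (G : Finset (X → Y → ℝ))
    (hGmeas : ∀ g ∈ G, Measurable (Function.uncurry g))
    (hGcard : G.card ≤ r ^ d)
    (δ : ℝ) (hδ : δ ∈ Set.Ioo (0 : ℝ) 1)
    (m : ℕ) (hm : 1 ≤ m) :
    ENNReal.ofReal (1 - δ) ≤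
      Measure.pi (fun _ : Fin m => μ)
        {S : Fin m → X × Y | ∀ (f : X → Y → ℝ), ∀ g ∈ G,
          (∀ x y, |f x y - g x y| ≤ γ) →
          marginLoss μ 0 g ≤ empMarginLoss (2 * γ) f S +
            Real.sqrt ((d * Real.log r + Real.log (1 / δ)) / (2 * m))} :=
  compression_generalization_bound_general μ r d hr γ G hGmeas hGcard δ hδ m hm
end
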